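/- arXiv:2308.06560 — 2 statements merged into one kernel-verified Lean document; each statement's English description precedes it below -/
import Mathlib

section
/- Let n ≥ 1 be a natural number and let V, X : ℝ → ℝ be differentiable on (0,∞) and satisfy n·V(r) − r·V′(r) = 2·X(r) − (4/r)·X′(r) for every r > 0. If in addition X(r) ≥ 0 for every r > 0, then the function P(r) = V(r)/r^n − 4·X(r)/r^{n+2} is non-increasing on the interval [√(2(n+2)), ∞). -/
/-! Cao–Zhou's identity turns the `V`-terms of `P'` into `X`-terms, leaving
`P'(r) = 2 X(r) (2(n+2) − r²) / r^{n+3}`, which is `≤ 0` once `X ≥ 0` and `r² ≥ 2(n+2)`. -/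

open Set

theorem HasDerivAt.div_pow {f : ℝ → ℝ} {f' r : ℝ} (hf : HasDerivAt f f' r) (hr : r ≠ 0) (k : ℕ) :
    HasDerivAt (fun s => f s / s ^ k) ((r * f' - k * f r) / r ^ (k + 1)) r := by
  refine (hf.fun_div (hasDerivAt_pow k r) (pow_ne_zero k hr)).congr_deriv ?_
  rcases k with _ | k
  · simp [hr]
  · field_simp
    push_cast
    ring

noncomputable def shrinkerP (n : ℕ) (V X : ℝ → ℝ) (s : ℝ) : ℝ :=
  V s / s ^ n - 4 * X s / s ^ (n + 2)

theorem hasDerivAt_shrinkerP {n : ℕ} {V X : ℝ → ℝ} {V' X' r : ℝ} (hV : HasDerivAt V V' r)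
    (hX : HasDerivAt X X' r) (hr : r ≠ 0)
    (hid : n * V r - r * V' = 2 * X r - 4 / r * X') :
    HasDerivAt (shrinkerP n V X) (2 * X r * (2 * (n + 2) - r ^ 2) / r ^ (n + 3)) r := by
  refine ((hV.div_pow hr n).sub ((hX.const_mul 4).div_pow hr (n + 2))).congr_deriv ?_
  field_simp at hid ⊢
  push_cast
  linear_combination (-r ^ (n + 2)) * hid

theorem shrinker_P_antitone_general (n : ℕ) (V X : ℝ → ℝ)
    (hV : ∀ r > (0 : ℝ), DifferentiableAt ℝ V r)
    (hX : ∀ r > (0 : ℝ), DifferentiableAt ℝ X r)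
    (hid : ∀ r > (0 : ℝ),
      (n : ℝ) * V r - r * deriv V r = 2 * X r - (4 / r) * deriv X r)
    (hX0 : ∀ r > (0 : ℝ), 0 ≤ X r) :
    AntitoneOn (fun s => V s / s ^ n - 4 * X s / s ^ (n + 2))
      (Set.Ici (Real.sqrt (2 * ((n : ℝ) + 2)))) := by
  set a := √(2 * ((n : ℝ) + 2))
  have ha : 0 < a := Real.sqrt_pos.mpr (by positivity)
  have hP : ∀ r ∈ Ici a, HasDerivAt (shrinkerP n V X)
      (2 * X r * (2 * (n + 2) - r ^ 2) / r ^ (n + 3)) r := fun r hr =>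
    have hr0 : 0 < r := ha.trans_le hr
    hasDerivAt_shrinkerP (hV r hr0).hasDerivAt (hX r hr0).hasDerivAt hr0.ne' (hid r hr0)
  refine antitoneOn_of_hasDerivWithinAt_nonpos (convex_Ici a)
    (fun r hr => (hP r hr).continuousAt.continuousWithinAt)
    (fun r hr => (hP r (interior_subset hr)).hasDerivWithinAt) fun r hr => ?_
  rw [interior_Ici] at hr
  have hr0 : 0 < r := ha.trans hr
  have hr2 : 2 * ((n : ℝ) + 2) ≤ r ^ 2 :=
    calc 2 * ((n : ℝ) + 2) = a ^ 2 := (Real.sq_sqrt (by positivity)).symm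
      _ ≤ r ^ 2 := pow_le_pow_left₀ ha.le hr.le 2
  have hXr : 0 ≤ X r := hX0 r hr0
  exact div_nonpos_of_nonpos_of_nonneg
    (mul_nonpos_of_nonneg_of_nonpos (by positivity) (by linarith)) (by positivity)

/-- Under Cao–Zhou's identity and `X ≥ 0` on `(0,∞)`, the function
`P(r) = V(r)/r^n − 4·X(r)/r^{n+2}` is non-increasing on `[√(2(n+2)), ∞)`. -/
theorem shrinker_P_antitone (n : ℕ) (hn : 1 ≤ n) (V X : ℝ → ℝ)
    (hV : ∀ r > (0 : ℝ), DifferentiableAt ℝ V r)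
    (hX : ∀ r > (0 : ℝ), DifferentiableAt ℝ X r)
    (hid : ∀ r > (0 : ℝ),
      (n : ℝ) * V r - r * deriv V r = 2 * X r - (4 / r) * deriv X r)
    (hX0 : ∀ r > (0 : ℝ), 0 ≤ X r) :
    AntitoneOn (fun s => V s / s ^ n - 4 * X s / s ^ (n + 2))
      (Set.Ici (Real.sqrt (2 * ((n : ℝ) + 2)))) :=
  shrinker_P_antitone_general n V X hV hX hid hX0
end

section
/- Let n ≥ 1 be a natural number and let V, X : ℝ → ℝ be differentiable on (0,∞) and satisfy n·V(r) − r·V′(r) = 2·X(r) − (4/r)·X′(r) for every r > 0. Assume X(r) ≥ 0 for all r > 0 and that P(r) = V(r)/r^n − 4·X(r)/r^{n+2} converges to a real number L as r → ∞. Then for every r ≥ √(2(n+2)) one has P(r) ≥ L, and hence V(r) ≥ L·r^n. -/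
open Filter Set

/-! Cao–Zhou's identity turns the derivative of `P` into `2 X(r) (2(n+2) - r²) / r^{n+3}`, which is
`≤ 0` once `r² ≥ 2(n+2)` because `X ≥ 0`. So `P` is antitone on `[√(2(n+2)), ∞)` and lies above its
limit `L` there; dropping the nonnegative term `4X/r^{n+2}` gives `V(r) ≥ L rⁿ`. -/

theorem hasDerivAt_div_pow {f : ℝ → ℝ} {f' x : ℝ} (k : ℕ) (hf : HasDerivAt f f' x) (hx : x ≠ 0) :
    HasDerivAt (fun s => f s / s ^ k) ((x * f' - k * f x) / x ^ (k + 1)) x := by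
  refine (hf.div (hasDerivAt_pow k x) (pow_ne_zero k hx)).congr_deriv ?_
  cases k with
  | zero => simp [hx]
  | succ k => field_simp; push_cast; ring

namespace CaoZhou

noncomputable def P (n : ℕ) (V X : ℝ → ℝ) (r : ℝ) : ℝ :=
  V r / r ^ n - 4 * X r / r ^ (n + 2)

variable {n : ℕ} {V X : ℝ → ℝ}

theorem hasDerivAt_P {x : ℝ} (hx : 0 < x) (hV : DifferentiableAt ℝ V x)
    (hX : DifferentiableAt ℝ X x)
    (hid : (n : ℝ) * V x - x * deriv V x = 2 * X x - (4 / x) * deriv X x) :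
    HasDerivAt (P n V X) (2 * X x * (2 * (n + 2) - x ^ 2) / x ^ (n + 3)) x := by
  refine ((hasDerivAt_div_pow n hV.hasDerivAt hx.ne').sub
    (hasDerivAt_div_pow (n + 2) (hX.hasDerivAt.const_mul 4) hx.ne')).congr_deriv ?_
  field_simp at hid ⊢
  push_cast
  linear_combination (-x ^ (n + 2)) * hid

theorem antitoneOn_P
    (hV : ∀ r > (0 : ℝ), DifferentiableAt ℝ V r)
    (hX : ∀ r > (0 : ℝ), DifferentiableAt ℝ X r)
    (hid : ∀ r > (0 : ℝ), (n : ℝ) * V r - r * deriv V r = 2 * X r - (4 / r) * deriv X r)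
    (hX0 : ∀ r > (0 : ℝ), 0 ≤ X r) :
    AntitoneOn (P n V X) (Ici (Real.sqrt (2 * ((n : ℝ) + 2)))) := by
  set r₀ := Real.sqrt (2 * ((n : ℝ) + 2))
  have hr₀ : 0 < r₀ := Real.sqrt_pos.mpr (by positivity)
  have hderiv (x : ℝ) (hx : r₀ ≤ x) := hasDerivAt_P (hr₀.trans_le hx) (hV x (hr₀.trans_le hx))
    (hX x (hr₀.trans_le hx)) (hid x (hr₀.trans_le hx))
  refine antitoneOn_of_deriv_nonpos (convex_Ici r₀)
    (fun x hx => (hderiv x hx).continuousAt.continuousWithinAt) ?_ ?_ <;>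
    intro x hx <;> rw [interior_Ici] at hx
  · exact (hderiv x hx.le).differentiableAt.differentiableWithinAt
  · have hx₀ : 0 < x := hr₀.trans hx
    have hsq : 2 * ((n : ℝ) + 2) ≤ x ^ 2 := (Real.sqrt_le_left hx₀.le).mp hx.le
    rw [(hderiv x hx.le).deriv]
    exact div_nonpos_of_nonpos_of_nonneg
      (mul_nonpos_of_nonneg_of_nonpos (by linarith [hX0 x hx₀]) (by linarith)) (by positivity)

end CaoZhou

theorem shrinker_volume_lower_general (n : ℕ) (V X : ℝ → ℝ)
    (hV : ∀ r > (0 : ℝ), DifferentiableAt ℝ V r)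
    (hX : ∀ r > (0 : ℝ), DifferentiableAt ℝ X r)
    (hid : ∀ r > (0 : ℝ),
      (n : ℝ) * V r - r * deriv V r = 2 * X r - (4 / r) * deriv X r)
    (hX0 : ∀ r > (0 : ℝ), 0 ≤ X r)
    (L : ℝ)
    (hP : Tendsto (fun s => V s / s ^ n - 4 * X s / s ^ (n + 2)) atTop (nhds L)) :
    ∀ r, Real.sqrt (2 * ((n : ℝ) + 2)) ≤ r →
      L ≤ V r / r ^ n - 4 * X r / r ^ (n + 2) ∧ L * r ^ n ≤ V r := by
  intro r hr
  have hr_pos : 0 < r := (Real.sqrt_pos.mpr (by positivity)).trans_le hr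
  have hL : L ≤ CaoZhou.P n V X r :=
    le_of_tendsto hP (eventually_ge_atTop r |>.mono fun s hs =>
      CaoZhou.antitoneOn_P hV hX hid hX0 hr (hr.trans hs) hs)
  refine ⟨hL, ?_⟩
  have hXr : 0 ≤ 4 * X r / r ^ (n + 2) := by have := hX0 r hr_pos; positivity
  have hLV : L ≤ V r / r ^ n := by unfold CaoZhou.P at hL; linarith
  exact (le_div_iff₀ (by positivity)).mp hLV

/-- Under Cao–Zhou's identity, `X ≥ 0` on `(0,∞)` and
`P(r) = V(r)/r^n − 4X(r)/r^{n+2} → L` as `r → ∞`, for every `r ≥ √(2(n+2))` one has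
`P(r) ≥ L` and hence `V(r) ≥ L·r^n`. -/
theorem shrinker_volume_lower (n : ℕ) (hn : 1 ≤ n) (V X : ℝ → ℝ)
    (hV : ∀ r > (0 : ℝ), DifferentiableAt ℝ V r)
    (hX : ∀ r > (0 : ℝ), DifferentiableAt ℝ X r)
    (hid : ∀ r > (0 : ℝ),
      (n : ℝ) * V r - r * deriv V r = 2 * X r - (4 / r) * deriv X r)
    (hX0 : ∀ r > (0 : ℝ), 0 ≤ X r)
    (L : ℝ)
    (hP : Tendsto (fun s => V s / s ^ n - 4 * X s / s ^ (n + 2)) atTop (nhds L)) :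
    ∀ r, Real.sqrt (2 * ((n : ℝ) + 2)) ≤ r →
      L ≤ V r / r ^ n - 4 * X r / r ^ (n + 2) ∧ L * r ^ n ≤ V r :=
  shrinker_volume_lower_general n V X hV hX hid hX0 L hP
end
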